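/- For every integer k ≥ 2, the identifying number of the Kautz digraph K(2,k) is γ^ID(K(2,k)) = 2^k − 2^(k−2). -/

import Mathlib

/-- The (open) in-neighbourhood of `v` in the digraph with adjacency relation `A`. -/
def Nminus {V : Type*} (A : V → V → Prop) (v : V) : Set V := {u | A u v}

/-- The out-neighbourhood of `v`. -/
def Nplus {V : Type*} (A : V → V → Prop) (v : V) : Set V := {u | A v u}

/-- The closed in-neighbourhood `N^-[v] = {v} ∪ N^-(v)`. -/
def NminusClosed {V : Type*} (A : V → V → Prop) (v : V) : Set V := insert v (Nminus A v)

/-- `N^-[S] = ⋃_{v ∈ S} N^-[v]`. -/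
def NminusSet {V : Type*} (A : V → V → Prop) (S : Set V) : Set V := ⋃ v ∈ S, NminusClosed A v

/-- A digraph is strongly connected if there is a directed path between any ordered
pair of vertices. -/
def StronglyConnected {V : Type*} (A : V → V → Prop) : Prop :=
  ∀ u v : V, Relation.ReflTransGen A u v

/-- The vertices of the line digraph of `A` are the arcs of `A`. -/
abbrev LineVertex {V : Type*} (A : V → V → Prop) : Type _ := {e : V × V // A e.1 e.2}

/-- Adjacency in the line digraph: there is an arc from `uv` to `wz` iff `v = w`. -/
def LineAdj {V : Type*} (A : V → V → Prop) (e f : LineVertex A) : Prop := e.val.2 = f.val.1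

/-- A digraph admits a `(1,≤ℓ)`-identifying code iff all distinct nonempty vertex subsets of
cardinality at most `ℓ` have distinct closed in-neighbourhoods. -/
def AdmitsIdCode {W : Type*} (R : W → W → Prop) (ℓ : ℕ) : Prop :=
  ∀ X Y : Set W, X.Nonempty → Y.Nonempty → X.ncard ≤ ℓ → Y.ncard ≤ ℓ → X ≠ Y →
    NminusSet R X ≠ NminusSet R Y

/-- `C` is a `(1,≤1)`-identifying code: a dominating set separating closed
in-neighbourhoods of distinct vertices. -/
def IsIdCode {W : Type*} (R : W → W → Prop) (C : Set W) : Prop :=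
  (∀ v : W, v ∈ C ∨ ∃ u ∈ C, R u v) ∧
  ∀ x y : W, x ≠ y → NminusClosed R x ∩ C ≠ NminusClosed R y ∩ C

/-- The identifying number: minimum size of a `(1,≤1)`-identifying code. -/
noncomputable def idNumber {W : Type*} (R : W → W → Prop) : ℕ :=
  sInf {n | ∃ C : Set W, IsIdCode R C ∧ C.ncard = n}

/-- The set of arcs of `A` with head `v`. -/
def omegaMinus {V : Type*} (A : V → V → Prop) (v : V) : Set (V × V) :=
  {p | A p.1 p.2 ∧ p.2 = v}

/-- The set of arcs of `A` with tail `v`. -/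
def omegaPlus {V : Type*} (A : V → V → Prop) (v : V) : Set (V × V) :=
  {p | A p.1 p.2 ∧ p.1 = v}

/-- `C` is an arc-identifying code of the digraph `A`: an arc-dominating and
arc-separating set of arcs. -/
def IsArcIdCode {V : Type*} (A : V → V → Prop) (C : Set (V × V)) : Prop :=
  (∀ p : V × V, A p.1 p.2 → ((insert p (omegaMinus A p.1)) ∩ C).Nonempty) ∧
  ∀ p q : V × V, A p.1 p.2 → A q.1 q.2 → p ≠ q →
    (insert p (omegaMinus A p.1)) ∩ C ≠ (insert q (omegaMinus A q.1)) ∩ C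

/-- Vertices of the Kautz digraph `K(d,k)`: words of length `k` over an alphabet of
`d+1` symbols with no two consecutive symbols equal. -/
def KautzVertex (d k : ℕ) : Type :=
  {x : Fin k → Fin (d + 1) // ∀ i j : Fin k, (j : ℕ) = (i : ℕ) + 1 → x i ≠ x j}

/-- Adjacency in the Kautz digraph: there is an arc from `x₁x₂…x_k` to `x₂…x_k y`. -/
def KautzAdj (d k : ℕ) (x y : KautzVertex d k) : Prop :=
  ∀ i j : Fin k, (j : ℕ) = (i : ℕ) + 1 → y.val i = x.val j

/-!
Two words of `K(2,k)` that differ only in their last letter have the same in-neighbours, so every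
identifying code contains one of them: it has at least half of the `3·2^(k-1)` vertices.

Conversely, call a step `x_i x_{i+1}` a descent if `x_{i+1} = x_i - 1` in `ℤ/3`, and keep the
words whose number of descents has parity different from `⌊(k-1)/2⌋`. Changing the first or the
last letter of a word flips the parity, so this set contains exactly one of the two in-neighbours
and exactly one of the two out-neighbours of every vertex. A vertex is then recognised by its
unique in-neighbour in the set, together with itself if it lies in the set; this can only fail on a
`2`-cycle inside the set. The `2`-cycles are the pairs of alternating words `abab…`, `baba…`, and
one of the two has exactly `⌊(k-1)/2⌋` descents.
-/
open Finset Function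

theorem idNumber_eq_ncard {W : Type*} {R : W → W → Prop} {C₀ : Set W} (hC₀ : IsIdCode R C₀)
    (hmin : ∀ C, IsIdCode R C → C₀.ncard ≤ C.ncard) : idNumber R = C₀.ncard :=
  le_antisymm (Nat.sInf_le ⟨C₀, hC₀, rfl⟩)
    (le_csInf ⟨_, C₀, hC₀, rfl⟩ (by rintro _ ⟨C, hC, rfl⟩; exact hmin C hC))

theorem IsIdCode.mem_or_mem_of_nminus_eq {W : Type*} {R : W → W → Prop} {C : Set W}
    (hC : IsIdCode R C) {x y : W} (hxy : x ≠ y) (h : Nminus R x = Nminus R y) : x ∈ C ∨ y ∈ C := by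
  by_contra! hn
  apply hC.2 x y hxy
  rw [NminusClosed, NminusClosed, Set.insert_inter_of_notMem hn.1,
    Set.insert_inter_of_notMem hn.2, h]

theorem isIdCode_of_existsUnique {W : Type*} {R : W → W → Prop} {C : Set W}
    (hirrefl : ∀ x, ¬ R x x) (hin : ∀ x, ∃! u, u ∈ C ∧ R u x)
    (hout : ∀ u x y, R u x → R u y → x ∉ C → y ∉ C → x = y)
    (hcycle : ∀ x y, x ∈ C → y ∈ C → R x y → R y x → x = y) : IsIdCode R C := by
  refine ⟨fun v => ?_, fun x y hxy heq => ?_⟩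
  · obtain ⟨u, ⟨hu, huv⟩, -⟩ := hin v
    exact Or.inr ⟨u, hu, huv⟩
  have mem : ∀ {z w}, z ∈ NminusClosed R w ∩ C ↔ (z = w ∨ R z w) ∧ z ∈ C := Iff.rfl
  obtain ⟨ux, ⟨hux, huxx⟩, hux_unique⟩ := hin x
  obtain ⟨uy, ⟨huy, huyy⟩, huy_unique⟩ := hin y
  have hux_y : ux = y ∨ ux = uy := by
    rcases (mem.1 (heq ▸ mem.2 ⟨Or.inr huxx, hux⟩)).1 with h | h
    exacts [Or.inl h, Or.inr (huy_unique ux ⟨hux, h⟩)]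
  have huy_x : uy = x ∨ uy = ux := by
    rcases (mem.1 (heq ▸ mem.2 ⟨Or.inr huyy, huy⟩)).1 with h | h
    exacts [Or.inl h, Or.inr (hux_unique uy ⟨huy, h⟩)]
  by_cases hu : ux = uy
  · subst hu
    -- a code vertex among `x, y` would be an in-neighbour of the other one, hence equal to `ux`
    by_cases hxC : x ∈ C
    · rcases (mem.1 (heq ▸ mem.2 ⟨Or.inl rfl, hxC⟩)).1 with h | h
      exacts [hxy h, hirrefl x (huy_unique x ⟨hxC, h⟩ ▸ huxx)]
    by_cases hyC : y ∈ C
    · rcases (mem.1 (heq ▸ mem.2 ⟨Or.inl rfl, hyC⟩)).1 with h | h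
      exacts [hxy h.symm, hirrefl y (hux_unique y ⟨hyC, h⟩ ▸ huyy)]
    exact hxy (hout ux x y huxx huyy hxC hyC)
  · obtain rfl := hux_y.resolve_right hu
    obtain rfl := huy_x.resolve_right (Ne.symm hu)
    exact hxy (hcycle uy ux huy hux huyy huxx)

theorem Function.Involutive.card_le_two_mul_ncard {α : Type*} [Finite α] {σ : α → α}
    (hσ : Involutive σ) {S : Set α} (hS : ∀ x, x ∈ S ∨ σ x ∈ S) : Nat.card α ≤ 2 * S.ncard := by
  have huniv : S ∪ σ '' S = Set.univ := by
    rw [hσ.image_eq_preimage_symm]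
    exact Set.eq_univ_of_forall hS
  calc Nat.card α = (S ∪ σ '' S).ncard := by rw [huniv, Set.ncard_univ]
    _ ≤ S.ncard + (σ '' S).ncard := Set.ncard_union_le _ _
    _ = 2 * S.ncard := by rw [Set.ncard_image_of_injective _ hσ.injective, two_mul]

theorem Function.Involutive.two_mul_ncard_eq {α : Type*} [Finite α] {σ : α → α}
    (hσ : Involutive σ) {S : Set α} (hS : ∀ x, x ∈ S ↔ σ x ∉ S) : 2 * S.ncard = Nat.card α := by
  have huniv : S ∪ σ '' S = Set.univ := by
    rw [hσ.image_eq_preimage_symm]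
    exact Set.eq_univ_of_forall fun x =>
      (em (x ∈ S)).imp_right fun hx => by_contra fun h => hx ((hS x).2 h)
  have hdisj : Disjoint S (σ '' S) := by
    rw [hσ.image_eq_preimage_symm, Set.disjoint_left]
    exact fun x hx => (hS x).1 hx
  rw [← Set.ncard_univ, ← huniv, Set.ncard_union_eq hdisj,
    Set.ncard_image_of_injective _ hσ.injective, two_mul]

theorem sum_range_two_mul_of_add_succ_eq_one {R : Type*} [AddCommMonoidWithOne R] {f : ℕ → R}
    {m : ℕ} (hf : ∀ n, n + 1 < 2 * m → f n + f (n + 1) = 1) : ∑ n ∈ range (2 * m), f n = m := by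
  induction m with
  | zero => simp
  | succ m ih =>
    rw [show 2 * (m + 1) = 2 * m + 1 + 1 by ring, sum_range_succ, sum_range_succ, add_assoc,
      ih fun n hn => hf n (by omega), hf (2 * m) (by omega), Nat.cast_succ]

namespace KautzVertex

variable {d k m : ℕ}

instance : Fintype (KautzVertex d k) := by unfold KautzVertex; infer_instance

/-- The `n`-th letter, with the junk value `0` for `n ≥ k`. -/
def get (x : KautzVertex d k) (n : ℕ) : Fin (d + 1) :=
  if h : n < k then x.val ⟨n, h⟩ else 0

theorem get_of_lt (x : KautzVertex d k) {n : ℕ} (h : n < k) : x.get n = x.val ⟨n, h⟩ := dif_pos h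

theorem get_ne_get_succ (x : KautzVertex d k) {n : ℕ} (h : n + 1 < k) :
    x.get n ≠ x.get (n + 1) := by
  rw [x.get_of_lt (by omega), x.get_of_lt h]
  exact x.prop ⟨n, by omega⟩ ⟨n + 1, h⟩ rfl

theorem ext_get {x y : KautzVertex d k} (h : ∀ n < k, x.get n = y.get n) : x = y := by
  refine Subtype.ext (funext fun i => ?_)
  simpa only [get_of_lt _ i.isLt] using h i i.isLt

def ofGet (f : ℕ → Fin (d + 1)) (hf : ∀ n, n + 1 < k → f n ≠ f (n + 1)) : KautzVertex d k :=
  ⟨fun i => f i, fun i j hij => by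
    simp only [hij]
    exact hf i (hij ▸ j.isLt)⟩

theorem get_ofGet {f : ℕ → Fin (d + 1)} {hf : ∀ n, n + 1 < k → f n ≠ f (n + 1)} {n : ℕ}
    (h : n < k) : (ofGet f hf).get n = f n :=
  dif_pos h

theorem kautzAdj_iff {u x : KautzVertex d k} :
    KautzAdj d k u x ↔ ∀ n, n + 1 < k → x.get n = u.get (n + 1) := by
  constructor
  · intro h n hn
    rw [x.get_of_lt (by omega), u.get_of_lt hn]
    exact h ⟨n, by omega⟩ ⟨n + 1, hn⟩ rfl
  · intro h i j hij
    have hj : (⟨i + 1, hij ▸ j.isLt⟩ : Fin k) = j := Fin.ext hij.symm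
    have := h i (hij ▸ j.isLt)
    rwa [x.get_of_lt i.isLt, u.get_of_lt (hij ▸ j.isLt), hj] at this

theorem kautzAdj_irrefl (hk : 2 ≤ k) (x : KautzVertex d k) : ¬ KautzAdj d k x x :=
  fun h => x.get_ne_get_succ (by omega) (kautzAdj_iff.1 h 0 (by omega))

theorem get_eq_get_of_kautzAdj {u x y : KautzVertex d k} (hx : KautzAdj d k u x)
    (hy : KautzAdj d k u y) {n : ℕ} (hn : n + 1 < k) : x.get n = y.get n := by
  rw [kautzAdj_iff.1 hx n hn, kautzAdj_iff.1 hy n hn]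

theorem nminus_eq_of_get_eq {x y : KautzVertex d k} (h : ∀ n, n + 1 < k → x.get n = y.get n) :
    Nminus (KautzAdj d k) x = Nminus (KautzAdj d k) y := by
  ext u
  simp only [Nminus, Set.mem_ofPred_eq, kautzAdj_iff]
  exact forall₂_congr fun n hn => by rw [h n hn]

theorem eq_of_get_eq_of_get_last_eq {x y : KautzVertex d k}
    (h : ∀ n, n + 1 < k → x.get n = y.get n) (hlast : x.get (k - 1) = y.get (k - 1)) : x = y :=
  ext_get fun n hn => if hn' : n + 1 < k then h n hn' else by rwa [show n = k - 1 by omega]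

theorem get_zero_ne_of_kautzAdj (hk : 2 ≤ k) {u x : KautzVertex d k} (h : KautzAdj d k u x) :
    u.get 0 ≠ x.get 0 := by
  rw [kautzAdj_iff.1 h 0 (by omega)]
  exact u.get_ne_get_succ (by omega)

theorem eq_of_kautzAdj_of_get_zero_eq {u u' x : KautzVertex d k} (hu : KautzAdj d k u x)
    (hu' : KautzAdj d k u' x) (h : u.get 0 = u'.get 0) : u = u' := by
  refine ext_get fun n hn => ?_
  cases n with
  | zero => exact h
  | succ n => rw [← kautzAdj_iff.1 hu n hn, kautzAdj_iff.1 hu' n hn]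

/-- The word `a x₀ x₁ …` of length `m`: an in-neighbour of `x` for `m = k`, a one-letter extension
of `x` for `m = k + 1`. -/
def cons (a : Fin (d + 1)) (x : KautzVertex d k) (ha : a ≠ x.get 0) (hm : m ≤ k + 1) :
    KautzVertex d m :=
  ofGet (fun | 0 => a | n + 1 => x.get n) fun n hn => by
    cases n with
    | zero => exact ha
    | succ n => exact x.get_ne_get_succ (by omega)

theorem get_cons_zero {a : Fin (d + 1)} {x : KautzVertex d k} {ha : a ≠ x.get 0}
    {hm : m ≤ k + 1} (h : 0 < m) : (x.cons a ha hm).get 0 = a :=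
  get_ofGet h

theorem get_cons_succ {a : Fin (d + 1)} {x : KautzVertex d k} {ha : a ≠ x.get 0}
    {hm : m ≤ k + 1} {n : ℕ} (h : n + 1 < m) : (x.cons a ha hm).get (n + 1) = x.get n :=
  get_ofGet h

theorem kautzAdj_cons {a : Fin (d + 1)} (x : KautzVertex d k) (ha : a ≠ x.get 0) :
    KautzAdj d k (x.cons a ha k.le_succ) x :=
  kautzAdj_iff.2 fun _ hn => (get_cons_succ hn).symm

def consEquiv : KautzVertex d (k + 2) ≃ Σ x : KautzVertex d (k + 1), {a // a ≠ x.get 0} where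
  toFun x := ⟨ofGet (fun n => x.get (n + 1)) fun _ hn => x.get_ne_get_succ (by omega),
    x.get 0, by rw [get_ofGet (by omega)]; exact x.get_ne_get_succ (by omega)⟩
  invFun p := p.1.cons p.2.1 p.2.2 le_rfl
  left_inv x := ext_get fun n hn => by
    cases n with
    | zero => exact get_cons_zero hn
    | succ n => rw [get_cons_succ hn, get_ofGet (by omega)]
  right_inv p := by
    refine Sigma.subtype_ext (ext_get fun n hn => ?_) ?_
    · rw [get_ofGet hn]
      exact get_cons_succ (by omega)
    · exact get_cons_zero (ha := p.2.2) (hm := le_rfl) (by omega)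

theorem natCard_eq (d k : ℕ) : Nat.card (KautzVertex d (k + 1)) = (d + 1) * d ^ k := by
  induction k with
  | zero =>
    rw [pow_zero, mul_one, ← Nat.card_fin (d + 1)]
    refine Nat.card_congr ⟨fun x => x.get 0,
      fun a => ofGet (fun _ => a) fun _ hn => absurd hn (by omega),
      fun x => ext_get fun n hn => ?_, fun a => get_ofGet one_pos⟩
    rw [get_ofGet hn, show n = 0 by omega]
  | succ k ih =>
    rw [Nat.card_congr consEquiv, Nat.card_sigma]
    simp only [Nat.card_eq_fintype_card, Fintype.card_subtype_compl, Fintype.card_unique,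
      Fintype.card_fin, add_tsub_cancel_right, sum_const, card_univ, smul_eq_mul]
    rw [← Nat.card_eq_fintype_card, ih, pow_succ, mul_assoc]

end KautzVertex

theorem fin_three_neg_sub_ne_left {a b : Fin 3} (h : a ≠ b) : -a - b ≠ a := by
  revert a b; decide

theorem fin_three_neg_sub_ne_right {a b : Fin 3} (h : a ≠ b) : -a - b ≠ b := by
  revert a b; decide

theorem fin_three_eq_neg_sub {a b c : Fin 3} (hab : a ≠ b) (hca : c ≠ a) (hcb : c ≠ b) :
    c = -a - b := by
  revert a b c; decide

theorem zmod_two_eq_of_ne_of_ne {a b c : ZMod 2} (ha : a ≠ c) (hb : b ≠ c) : a = b := by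
  revert a b c; decide

theorem zmod_two_ne_iff_eq_of_ne {a b c : ZMod 2} (h : a ≠ b) : a ≠ c ↔ b = c := by
  revert a b c; decide

theorem zmod_two_eq_zero_or_eq_zero_of_add_eq_one {a b : ZMod 2} (h : a + b = 1) :
    a = 0 ∨ b = 0 := by
  revert a b; decide

def downStep (a b : Fin 3) : ZMod 2 := if b + 1 = a then 1 else 0

theorem downStep_add_downStep_swap {a b : Fin 3} (h : a ≠ b) : downStep a b + downStep b a = 1 := by
  revert a b; decide

theorem eq_of_downStep_eq_left {a a' b : Fin 3} (ha : a ≠ b) (ha' : a' ≠ b)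
    (h : downStep a b = downStep a' b) : a = a' := by
  revert a a' b; decide

theorem eq_of_downStep_eq_right {a b b' : Fin 3} (hb : a ≠ b) (hb' : a ≠ b')
    (h : downStep a b = downStep a b') : b = b' := by
  revert a b b'; decide

namespace KautzVertex

variable {k : ℕ}

/-- For `a ≠ b` in `Fin 3`, `-a - b` is the third letter. -/
def sibling (x : KautzVertex 2 k) : KautzVertex 2 k :=
  ofGet (fun n => if n + 1 = k then -x.get (k - 2) - x.get (k - 1) else x.get n) fun n hn => by
    rw [if_neg (by omega : ¬ n + 1 = k)]
    split_ifs with h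
    · rw [show k - 2 = n by omega, show k - 1 = n + 1 by omega]
      exact (fin_three_neg_sub_ne_left (x.get_ne_get_succ hn)).symm
    · exact x.get_ne_get_succ hn

theorem get_sibling_of_lt (x : KautzVertex 2 k) {n : ℕ} (h : n + 1 < k) :
    x.sibling.get n = x.get n := by
  rw [sibling, get_ofGet (by omega), if_neg (by omega)]

theorem get_sibling_last (hk : 2 ≤ k) (x : KautzVertex 2 k) :
    x.sibling.get (k - 1) = -x.get (k - 2) - x.get (k - 1) := by
  rw [sibling, get_ofGet (by omega), if_pos (by omega)]

theorem get_sub_two_ne_get_sub_one (hk : 2 ≤ k) (x : KautzVertex 2 k) :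
    x.get (k - 2) ≠ x.get (k - 1) := by
  have := x.get_ne_get_succ (n := k - 2) (by omega)
  rwa [show k - 2 + 1 = k - 1 by omega] at this

theorem sibling_ne (hk : 2 ≤ k) (x : KautzVertex 2 k) : x.sibling ≠ x := fun h =>
  fin_three_neg_sub_ne_right (get_sub_two_ne_get_sub_one hk x)
    ((get_sibling_last hk x).symm.trans (congrArg (get · (k - 1)) h))

theorem eq_sibling_of_get_eq (hk : 2 ≤ k) {x y : KautzVertex 2 k} (hne : x ≠ y)
    (h : ∀ n, n + 1 < k → x.get n = y.get n) : y = x.sibling := by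
  refine eq_of_get_eq_of_get_last_eq (fun n hn => by rw [get_sibling_of_lt x hn, h n hn]) ?_
  have hy := get_sub_two_ne_get_sub_one hk y
  rw [← h (k - 2) (by omega)] at hy
  rw [get_sibling_last hk]
  exact fin_three_eq_neg_sub (get_sub_two_ne_get_sub_one hk x) hy.symm
    fun hl => hne (eq_of_get_eq_of_get_last_eq h hl.symm)

theorem sibling_involutive (hk : 2 ≤ k) : Involutive (sibling (k := k)) := fun x =>
  (eq_sibling_of_get_eq hk (sibling_ne hk x) fun _ hn => get_sibling_of_lt x hn).symm

theorem nminus_sibling (x : KautzVertex 2 k) :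
    Nminus (KautzAdj 2 k) x.sibling = Nminus (KautzAdj 2 k) x :=
  nminus_eq_of_get_eq fun _ hn => get_sibling_of_lt x hn

theorem card_le_two_mul_ncard_of_isIdCode (hk : 2 ≤ k) {C : Set (KautzVertex 2 k)}
    (hC : IsIdCode (KautzAdj 2 k) C) : Nat.card (KautzVertex 2 k) ≤ 2 * C.ncard :=
  (sibling_involutive hk).card_le_two_mul_ncard fun x =>
    hC.mem_or_mem_of_nminus_eq (sibling_ne hk x).symm (nminus_sibling x).symm

def downParity (x : KautzVertex 2 k) (m : ℕ) : ZMod 2 :=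
  ∑ n ∈ range m, downStep (x.get n) (x.get (n + 1))

theorem downParity_congr {x y : KautzVertex 2 k} {m : ℕ} (h : ∀ n ≤ m, x.get n = y.get n) :
    x.downParity m = y.downParity m :=
  sum_congr rfl fun n hn => by
    have := mem_range.1 hn
    rw [h n (by omega), h (n + 1) (by omega)]

theorem downParity_eq_downParity_add (hk : 2 ≤ k) (x : KautzVertex 2 k) :
    x.downParity (k - 1) = x.downParity (k - 2) + downStep (x.get (k - 2)) (x.get (k - 1)) := by
  rw [downParity, show k - 1 = k - 2 + 1 by omega, sum_range_succ, ← downParity]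

theorem downParity_eq_of_kautzAdj (hk : 2 ≤ k) {u x : KautzVertex 2 k} (h : KautzAdj 2 k u x) :
    u.downParity (k - 1) = downStep (u.get 0) (x.get 0) + x.downParity (k - 2) := by
  rw [downParity, show k - 1 = k - 2 + 1 by omega, sum_range_succ', add_comm,
    ← kautzAdj_iff.1 h 0 (by omega)]
  refine congrArg _ (sum_congr rfl fun n hn => ?_)
  have hn : n + 2 < k := by have := mem_range.1 hn; omega
  rw [kautzAdj_iff.1 h n (by omega), kautzAdj_iff.1 h (n + 1) hn]

theorem eq_of_kautzAdj_of_downParity_eq (hk : 2 ≤ k) {u u' x : KautzVertex 2 k}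
    (hu : KautzAdj 2 k u x) (hu' : KautzAdj 2 k u' x)
    (h : u.downParity (k - 1) = u'.downParity (k - 1)) : u = u' := by
  rw [downParity_eq_of_kautzAdj hk hu, downParity_eq_of_kautzAdj hk hu', add_left_inj] at h
  exact eq_of_kautzAdj_of_get_zero_eq hu hu' (eq_of_downStep_eq_left
    (get_zero_ne_of_kautzAdj hk hu) (get_zero_ne_of_kautzAdj hk hu') h)

theorem eq_of_get_eq_of_downParity_eq (hk : 2 ≤ k) {x y : KautzVertex 2 k}
    (hpre : ∀ n, n + 1 < k → x.get n = y.get n)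
    (h : x.downParity (k - 1) = y.downParity (k - 1)) : x = y := by
  rw [downParity_eq_downParity_add hk, downParity_eq_downParity_add hk,
    downParity_congr fun n hn => hpre n (by omega), hpre (k - 2) (by omega), add_right_inj] at h
  refine eq_of_get_eq_of_get_last_eq hpre (eq_of_downStep_eq_right ?_ ?_ h)
  · rw [← hpre (k - 2) (by omega)]
    exact get_sub_two_ne_get_sub_one hk x
  · exact get_sub_two_ne_get_sub_one hk y

theorem get_add_two_of_two_cycle {x y : KautzVertex 2 k} (hxy : KautzAdj 2 k x y)
    (hyx : KautzAdj 2 k y x) {n : ℕ} (hn : n + 2 < k) : x.get (n + 2) = x.get n := by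
  rw [kautzAdj_iff.1 hyx n (by omega), kautzAdj_iff.1 hxy (n + 1) hn]

theorem downParity_two_mul_of_two_cycle {x y : KautzVertex 2 k} (hxy : KautzAdj 2 k x y)
    (hyx : KautzAdj 2 k y x) {m : ℕ} (hm : 2 * m < k) : x.downParity (2 * m) = m :=
  sum_range_two_mul_of_add_succ_eq_one fun n hn => by
    rw [get_add_two_of_two_cycle hxy hyx (by omega)]
    exact downStep_add_downStep_swap (x.get_ne_get_succ (by omega))

theorem downParity_two_mul_add_one_of_two_cycle {x y : KautzVertex 2 k} (hxy : KautzAdj 2 k x y)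
    (hyx : KautzAdj 2 k y x) {m : ℕ} (hm : 2 * m + 1 < k) :
    x.downParity (2 * m + 1) = downStep (x.get 0) (x.get 1) + m := by
  rw [downParity, sum_range_succ', add_comm, sum_range_two_mul_of_add_succ_eq_one fun n hn => ?_]
  rw [get_add_two_of_two_cycle hxy hyx (n := n + 1) (by omega)]
  exact downStep_add_downStep_swap (x.get_ne_get_succ (n := n + 1) (by omega))

theorem downParity_of_two_cycle (hk : 2 ≤ k) {x y : KautzVertex 2 k} (hxy : KautzAdj 2 k x y)
    (hyx : KautzAdj 2 k y x) :
    x.downParity (k - 1) = ((k - 1) / 2 : ℕ) ∨ y.downParity (k - 1) = ((k - 1) / 2 : ℕ) := by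
  obtain ⟨m, hm | hm⟩ := Nat.even_or_odd' (k - 1)
  · left
    rw [hm, downParity_two_mul_of_two_cycle hxy hyx (by omega)]
    congr 1; omega
  · rw [hm, downParity_two_mul_add_one_of_two_cycle hxy hyx (by omega),
      downParity_two_mul_add_one_of_two_cycle hyx hxy (by omega),
      ← kautzAdj_iff.1 hxy 0 (by omega), ← kautzAdj_iff.1 hyx 0 (by omega),
      show (2 * m + 1) / 2 = m by omega]
    simp only [add_eq_right]
    exact zmod_two_eq_zero_or_eq_zero_of_add_eq_one
      (downStep_add_downStep_swap (get_zero_ne_of_kautzAdj hk hxy))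

end KautzVertex

def kautzCode (k : ℕ) : Set (KautzVertex 2 k) :=
  {x | x.downParity (k - 1) ≠ ((k - 1) / 2 : ℕ)}

namespace KautzVertex

variable {k : ℕ}

theorem existsUnique_mem_kautzCode_kautzAdj (hk : 2 ≤ k) (x : KautzVertex 2 k) :
    ∃! u, u ∈ kautzCode k ∧ KautzAdj 2 k u x := by
  have h₁ : x.get 0 + 1 ≠ x.get 0 := add_ne_left.2 (by decide)
  have h₂ := fin_three_neg_sub_ne_left h₁.symm
  have hadj₁ := kautzAdj_cons x h₁
  have hadj₂ := kautzAdj_cons x h₂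
  have hne : x.cons _ h₁ k.le_succ ≠ x.cons _ h₂ k.le_succ := fun h => by
    have := congrArg (get · 0) h
    rw [get_cons_zero (by omega), get_cons_zero (by omega)] at this
    exact fin_three_neg_sub_ne_right h₁.symm this.symm
  have hex : ∃ u, u ∈ kautzCode k ∧ KautzAdj 2 k u x := by
    by_contra! h
    exact hne (eq_of_kautzAdj_of_downParity_eq hk hadj₁ hadj₂
      ((not_not.1 (h _ · hadj₁)).trans (not_not.1 (h _ · hadj₂)).symm))
  obtain ⟨u, hu, hux⟩ := hex
  exact ⟨u, ⟨hu, hux⟩, fun u' ⟨hu', hu'x⟩ =>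
    eq_of_kautzAdj_of_downParity_eq hk hu'x hux (zmod_two_eq_of_ne_of_ne hu' hu)⟩

theorem mem_kautzCode_iff_sibling_not_mem (hk : 2 ≤ k) (x : KautzVertex 2 k) :
    x ∈ kautzCode k ↔ x.sibling ∉ kautzCode k := by
  have hne : x.downParity (k - 1) ≠ x.sibling.downParity (k - 1) := fun h =>
    sibling_ne hk x (eq_of_get_eq_of_downParity_eq hk
      (fun n hn => get_sibling_of_lt x hn) h.symm)
  simp only [kautzCode, Set.mem_ofPred_eq, not_not]
  exact zmod_two_ne_iff_eq_of_ne hne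

theorem isIdCode_kautzCode (hk : 2 ≤ k) : IsIdCode (KautzAdj 2 k) (kautzCode k) :=
  isIdCode_of_existsUnique (kautzAdj_irrefl hk) (existsUnique_mem_kautzCode_kautzAdj hk)
    (fun _ _ _ hx hy hxC hyC => eq_of_get_eq_of_downParity_eq hk
      (fun _ hn => get_eq_get_of_kautzAdj hx hy hn) ((not_not.1 hxC).trans (not_not.1 hyC).symm))
    (fun _ _ hxC hyC hxy hyx => ((downParity_of_two_cycle hk hxy hyx).elim hxC hyC).elim)

theorem two_mul_ncard_kautzCode (hk : 2 ≤ k) :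
    2 * (kautzCode k).ncard = Nat.card (KautzVertex 2 k) :=
  (sibling_involutive hk).two_mul_ncard_eq (mem_kautzCode_iff_sibling_not_mem hk)

end KautzVertex

/-- The identifying number of the Kautz digraph `K(2,k)` is `2^k - 2^(k-2)` for `k ≥ 2`. -/
theorem kautz_two_id_number (k : ℕ) (hk : 2 ≤ k) :
    idNumber (KautzAdj 2 k) = 2 ^ k - 2 ^ (k - 2) := by
  have hcard : Nat.card (KautzVertex 2 k) = 2 * (2 ^ k - 2 ^ (k - 2)) := by
    obtain ⟨n, rfl⟩ : ∃ n, k = n + 2 := ⟨k - 2, by omega⟩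
    rw [KautzVertex.natCard_eq, Nat.add_sub_cancel, pow_add _ n 2]
    omega
  have hcode := KautzVertex.two_mul_ncard_kautzCode hk
  rw [idNumber_eq_ncard (KautzVertex.isIdCode_kautzCode hk) fun C hC => ?_]
  · omega
  · have := KautzVertex.card_le_two_mul_ncard_of_isIdCode hk hC
    omega
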